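/- Let ρ_iso = λ |φ_max⟩⟨φ_max| + (1−λ)(1/d²) I be an isotropic state on ℂ^d ⊗ ℂ^d, where |φ_max⟩ = (1/√d) ∑_{k=1}^d |kk⟩ and 0 ≤ λ ≤ 1. Then for every orthonormal basis {e_1,…,e_d} of the first factor, the dephased state ∑_i (|e_i⟩⟨e_i| ⊗ I) ρ_iso (|e_i⟩⟨e_i| ⊗ I) has von Neumann entropy equal to log₂ d − (λ + (1−λ)/d) log₂(λ + (1−λ)/d) − (d−1)·((1−λ)/d)·log₂((1−λ)/d); in particular this value is independent of the chosen basis. -/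

import Mathlib

open Matrix
open scoped Kronecker ComplexOrder

/-- von Neumann entropy in bits (with convention `0 * log₂ 0 = 0`). -/
noncomputable def vnEntropy {n : Type*} [Fintype n] [DecidableEq n] (A : Matrix n n ℂ) : ℝ :=
  if h : A.IsHermitian then -∑ i, h.eigenvalues i * Real.logb 2 (h.eigenvalues i) else 0

/-- The maximally entangled vector `(1/√d) ∑_k |kk⟩` in ℂ^d ⊗ ℂ^d. -/
noncomputable def phiMax (d : ℕ) : Fin d × Fin d → ℂ := fun x =>
  if x.1 = x.2 then ((1 / Real.sqrt d : ℝ) : ℂ) else 0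

/-! Let `V` be the unitary whose rows are the conjugated basis vectors `ē_i`, and `W = V ⊗ V̄`.
Then `|e_i⟩⟨e_i| ⊗ I = W⋆ (|i⟩⟨i| ⊗ I) W`, and `W` fixes `φ_max` (the `U ⊗ Ū`-invariance of
the maximally entangled vector), so it commutes with the isotropic state. Hence the dephased
state is unitarily equivalent to the dephasing of `ρ_iso` in the standard basis, which is
diagonal with `d` entries `(λ + (1-λ)/d)/d` and `d(d-1)` entries `(1-λ)/d²`; the entropy is
read off from this spectrum. -/

namespace Matrix

/-- The dephasing `ρ ↦ ∑ᵢ (|i⟩⟨i| ⊗ I) ρ (|i⟩⟨i| ⊗ I)` of the first factor, in closed form. -/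
def dephaseFst {m n R : Type*} [DecidableEq m] [Zero R] (M : Matrix (m × n) (m × n) R) :
    Matrix (m × n) (m × n) R :=
  of fun p q => if p.1 = q.1 then M p q else 0

variable {n : Type*} [Fintype n]

open Polynomial in
theorem IsHermitian.sum_comp_eigenvalues_of_charpoly_eq [DecidableEq n] {𝕜 : Type*} [RCLike 𝕜]
    {A : Matrix n n 𝕜} (hA : A.IsHermitian) {μ : n → ℝ}
    (h : A.charpoly = ∏ i, (X - C (μ i : 𝕜))) (f : ℝ → ℝ) :
    ∑ i, f (hA.eigenvalues i) = ∑ i, f (μ i) := by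
  have hroots : Finset.univ.val.map (RCLike.ofReal ∘ hA.eigenvalues)
      = Finset.univ.val.map (RCLike.ofReal ∘ μ : n → 𝕜) := by
    rw [← hA.roots_charpoly_eq_eigenvalues, h, roots_prod _ _ (by
      simp [Finset.prod_ne_zero_iff, X_sub_C_ne_zero])]
    simp
  have hmap : Finset.univ.val.map hA.eigenvalues = Finset.univ.val.map μ := by
    simpa [Multiset.map_map, Function.comp_def] using congrArg (Multiset.map RCLike.re) hroots
  have := congrArg (fun m => (m.map f).sum) hmap
  rwa [Multiset.map_map, Multiset.map_map] at this

theorem charpoly_star_mul_mul_of_mem_unitaryGroup [DecidableEq n] {R : Type*} [CommRing R]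
    [StarRing R] {U : Matrix n n R} (hU : U ∈ unitaryGroup n R) (A : Matrix n n R) :
    (star U * A * U).charpoly = A.charpoly := by
  rw [charpoly_mul_comm, ← Matrix.mul_assoc, mem_unitaryGroup_iff.mp hU, Matrix.one_mul]

theorem conjTranspose_mul_single_mul [DecidableEq n] {R : Type*} [CommSemiring R] [StarRing R]
    (V : Matrix n n R) (i : n) : Vᴴ * single i i 1 * V = vecMulVec (star (V i)) (V i) := by
  rw [single_eq_single_vecMulVec_single, mul_vecMulVec, vecMulVec_mul]
  congr 1 <;> ext <;> simp [mulVec, vecMul, dotProduct, Pi.single_apply]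

theorem mul_vecMulVec_star_mul_conjTranspose {m R : Type*} [Fintype m] [CommSemiring R]
    [StarRing R] (M : Matrix m n R) (v : n → R) :
    M * vecMulVec v (star v) * Mᴴ = vecMulVec (M *ᵥ v) (star (M *ᵥ v)) := by
  rw [mul_vecMulVec, vecMulVec_mul, star_mulVec]

theorem star_mul_mul_kronecker_one [DecidableEq n] {m R : Type*} [Fintype m] [CommRing R]
    [StarRing R] (U : Matrix m m R) {V : Matrix n n R} (hV : V ∈ unitaryGroup n R)
    (A : Matrix m m R) :
    (star U * A * U) ⊗ₖ (1 : Matrix n n R) = star (U ⊗ₖ V) * (A ⊗ₖ 1) * (U ⊗ₖ V) := by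
  have hV' : Vᴴ * V = 1 := mem_unitaryGroup_iff'.mp hV
  simp only [star_eq_conjTranspose, conjTranspose_kronecker, ← mul_kronecker_mul, Matrix.mul_one,
    hV']

theorem sum_single_kronecker_one_mul_mul_eq_dephaseFst [DecidableEq n] {m R : Type*} [Fintype m]
    [DecidableEq m] [Semiring R] (M : Matrix (m × n) (m × n) R) :
    ∑ i, (single i i 1 ⊗ₖ (1 : Matrix n n R)) * M * (single i i 1 ⊗ₖ 1)
      = dephaseFst M := by
  ext ⟨i, j⟩ q
  simp [dephaseFst, sum_apply, mul_apply, single, one_apply, Fintype.sum_prod_type, ite_and,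
    Finset.sum_ite_eq, Finset.sum_ite_eq']
  split_ifs <;> simp_all

end Matrix

theorem Finset.sum_mul_mul_eq_mul_sum_mul {ι R : Type*} [Semiring R] (s : Finset ι)
    (u v x : R) (q : ι → R) :
    ∑ i ∈ s, (u * q i * v) * x * (u * q i * v) = u * (∑ i ∈ s, q i * (v * x * u) * q i) * v := by
  simp only [Finset.mul_sum, Finset.sum_mul, mul_assoc]

theorem Fintype.sum_comp_ite_fst_eq_snd {n : Type*} [Fintype n] [DecidableEq n]
    (f : ℝ → ℝ) (x y : ℝ) :
    ∑ p : n × n, f (if p.1 = p.2 then x else y)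
      = card n * f x + card n * (card n - 1) * f y := by
  have hrow (i : n) : ∑ j, f (if i = j then x else y) = f x + (card n - 1) * f y := by
    have hsplit (j : n) : f (if i = j then x else y) = f y + if i = j then f x - f y else 0 := by
      split_ifs <;> ring
    simp only [hsplit, Finset.sum_add_distrib, Finset.sum_ite_eq, Finset.mem_univ, if_true,
      Finset.sum_const, Finset.card_univ, nsmul_eq_mul]
    ring
  rw [Fintype.sum_prod_type]
  simp only [hrow, Finset.sum_const, Finset.card_univ, nsmul_eq_mul]
  ring

theorem Real.mul_div_mul_logb_div (b : ℝ) {d : ℝ} (hd : d ≠ 0) (x : ℝ) :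
    d * (x / d * Real.logb b (x / d)) = x * Real.logb b x - x * Real.logb b d := by
  rcases eq_or_ne x 0 with rfl | hx
  · simp
  · rw [Real.logb_div hx hd]
    field_simp

theorem vnEntropy_star_mul_diagonal_mul {n : Type*} [Fintype n] [DecidableEq n]
    {U : Matrix n n ℂ} (hU : U ∈ unitaryGroup n ℂ) (μ : n → ℝ) :
    vnEntropy (star U * diagonal (fun i => (μ i : ℂ)) * U)
      = -∑ i, μ i * Real.logb 2 (μ i) := by
  have hD : (diagonal (fun i => (μ i : ℂ))).IsHermitian :=
    isHermitian_diagonal_of_self_adjoint _ (by ext; simp)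
  have hA : (star U * diagonal (fun i => (μ i : ℂ)) * U).IsHermitian :=
    isHermitian_conjTranspose_mul_mul U hD
  have hchar : (star U * diagonal (fun i => (μ i : ℂ)) * U).charpoly
      = ∏ i, (Polynomial.X - Polynomial.C (μ i : ℂ)) := by
    rw [charpoly_star_mul_mul_of_mem_unitaryGroup hU, charpoly_diagonal]
  rw [vnEntropy, dif_pos hA,
    hA.sum_comp_eigenvalues_of_charpoly_eq hchar (fun x => x * Real.logb 2 x)]

theorem kronecker_map_star_mulVec_phiMax {d : ℕ} {V : Matrix (Fin d) (Fin d) ℂ}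
    (hV : V ∈ unitaryGroup (Fin d) ℂ) : (V ⊗ₖ V.map star) *ᵥ phiMax d = phiMax d := by
  ext ⟨i, j⟩
  have := congrFun (congrFun (mem_unitaryGroup_iff.mp hV) i) j
  simp [mulVec, dotProduct, phiMax, Fintype.sum_prod_type, mul_apply, one_apply] at *
  rw [← Finset.sum_mul, this]
  split_ifs <;> simp

noncomputable def isotropicState (d : ℕ) (l : ℝ) : Matrix (Fin d × Fin d) (Fin d × Fin d) ℂ :=
  (l : ℂ) • vecMulVec (phiMax d) (star (phiMax d)) +
    (((1 - l) / (d ^ 2 : ℝ) : ℝ) : ℂ) • (1 : Matrix (Fin d × Fin d) (Fin d × Fin d) ℂ)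

theorem mul_isotropicState_mul_star {d : ℕ} (l : ℝ)
    {W : Matrix (Fin d × Fin d) (Fin d × Fin d) ℂ} (hW : W ∈ unitaryGroup _ ℂ)
    (hWφ : W *ᵥ phiMax d = phiMax d) :
    W * isotropicState d l * star W = isotropicState d l := by
  have hW' : W * Wᴴ = 1 := mem_unitaryGroup_iff.mp hW
  simp only [isotropicState, Matrix.mul_add, Matrix.add_mul, Matrix.mul_smul, Matrix.smul_mul,
    star_eq_conjTranspose, mul_vecMulVec_star_mul_conjTranspose, hWφ, Matrix.mul_one, hW']

theorem dephaseFst_isotropicState (d : ℕ) (l : ℝ) :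
    dephaseFst (isotropicState d l) = diagonal fun p : Fin d × Fin d =>
      ((if p.1 = p.2 then (l + (1 - l) / d) / d else (1 - l) / d / d : ℝ) : ℂ) := by
  have hsqrt : ((√d : ℝ) : ℂ)⁻¹ * ((√d : ℝ) : ℂ)⁻¹ = (d : ℂ)⁻¹ := by
    rw [← mul_inv, ← Complex.ofReal_mul, Real.mul_self_sqrt d.cast_nonneg, Complex.ofReal_natCast]
  ext ⟨i, j⟩ ⟨i', j'⟩
  simp only [dephaseFst, of_apply, diagonal_apply, isotropicState, Matrix.add_apply,
    Matrix.smul_apply, vecMulVec_apply, phiMax, one_apply, Pi.star_apply, Prod.mk.injEq]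
  split_ifs <;> simp_all <;> ring

theorem entropy_of_dephased_isotropic
    {d : ℕ} (hd : 0 < d) (l : ℝ)
    (ρiso : Matrix (Fin d × Fin d) (Fin d × Fin d) ℂ)
    (hρ : ρiso = (l : ℂ) • vecMulVec (phiMax d) (star (phiMax d)) +
        (((1 - l) / (d ^ 2 : ℝ) : ℝ) : ℂ) • (1 : Matrix (Fin d × Fin d) (Fin d × Fin d) ℂ))
    (e : Fin d → (Fin d → ℂ))
    (he : ∀ i j, star (e i) ⬝ᵥ e j = if i = j then 1 else 0) :
    vnEntropy (∑ i,
        (vecMulVec (e i) (star (e i)) ⊗ₖ (1 : Matrix (Fin d) (Fin d) ℂ)) * ρiso *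
        (vecMulVec (e i) (star (e i)) ⊗ₖ (1 : Matrix (Fin d) (Fin d) ℂ)))
      = Real.logb 2 d
        - (l + (1 - l) / d) * Real.logb 2 (l + (1 - l) / d)
        - (d - 1) * ((1 - l) / d) * Real.logb 2 ((1 - l) / d) := by
  set V : Matrix (Fin d) (Fin d) ℂ := of fun i => star (e i)
  have hVrow (i : Fin d) : V i = star (e i) := rfl
  have hV : V ∈ unitaryGroup (Fin d) ℂ := mem_unitaryGroup_iff.mpr <| by
    ext i j
    simpa [V, mul_apply, one_apply, dotProduct] using he i j
  have hVbar : V.map star ∈ unitaryGroup (Fin d) ℂ := map_star_mem_unitaryGroup_iff.mpr hV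
  set W := V ⊗ₖ V.map star
  have hW : W ∈ unitaryGroup _ ℂ := kronecker_mem_unitary hV hVbar
  have hprojector (i : Fin d) : vecMulVec (e i) (star (e i)) ⊗ₖ (1 : Matrix (Fin d) (Fin d) ℂ)
      = star W * (single i i 1 ⊗ₖ 1) * W := by
    rw [← star_mul_mul_kronecker_one V hVbar, star_eq_conjTranspose, conjTranspose_mul_single_mul,
      hVrow, star_star]
  replace hρ : ρiso = isotropicState d l := hρ
  simp only [hprojector]
  rw [Finset.sum_mul_mul_eq_mul_sum_mul, hρ,
    mul_isotropicState_mul_star l hW (kronecker_map_star_mulVec_phiMax hV),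
    sum_single_kronecker_one_mul_mul_eq_dephaseFst, dephaseFst_isotropicState,
    vnEntropy_star_mul_diagonal_mul hW,
    Fintype.sum_comp_ite_fst_eq_snd (fun x => x * Real.logb 2 x), Fintype.card_fin]
  have hd0 : (d : ℝ) ≠ 0 := Nat.cast_ne_zero.mpr hd.ne'
  have htrace : (l + (1 - l) / d) + (d - 1) * ((1 - l) / d) = 1 := by field_simp; ring
  linear_combination -Real.mul_div_mul_logb_div 2 hd0 (l + (1 - l) / d)
    - (d - 1) * Real.mul_div_mul_logb_div 2 hd0 ((1 - l) / d) + Real.logb 2 d * htrace
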